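/- There exists a constant C > 0 such that for every real number A ≥ 1 and every C¹ function h : (−1, 1) → ℂ one has A·∫_{−1}^{1} |h(x)|² dx ≤ C·∫_{−1}^{1} (|h'(x)|² + A²·x²·|h(x)|²) dx, the inequality being trivially valid when the right-hand side is infinite. The constant C is independent of A and of h. -/

import Mathlib

/-!
Put `δ = (6A)^(-1/2)`. Where `|x| ≥ δ` the weight gives `A ≤ 6 A² x²`, so the inequality holds
pointwise. For `|x| ≤ δ`, the fundamental theorem of calculus and Cauchy–Schwarz bound `|h(x)|²`
by `2|h(y)|² + 6δ ∫|h'|²` for every `y ∈ [δ, 2δ]`; there `|h(y)|² ≤ y²|h(y)|²/δ²`, and averaging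
over `y` and then integrating over `(-δ, δ)` costs a factor `2δ`, which `Aδ² = 1/6` turns into
`24 ∫ A²x²|h|² + 2 ∫|h'|²`. Altogether `C = 32` works.
-/

open MeasureTheory Set
open scoped ENNReal

theorem sq_intervalIntegral_le {f : ℝ → ℝ} {a b : ℝ} (hab : a ≤ b)
    (hf : IntervalIntegrable f volume a b)
    (hf2 : IntervalIntegrable (fun t => f t ^ 2) volume a b) :
    (∫ t in a..b, f t) ^ 2 ≤ (b - a) * ∫ t in a..b, f t ^ 2 := by
  rcases hab.eq_or_lt with rfl | hlt
  · simp
  set S := ∫ t in a..b, f t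
  set c := S / (b - a)
  have hc : c * (b - a) = S := div_mul_cancel₀ S (sub_pos.2 hlt).ne'
  have hvar : 0 ≤ ∫ t in a..b, (f t - c) ^ 2 :=
    intervalIntegral.integral_nonneg hab fun _ _ => sq_nonneg _
  have hexpand : ∫ t in a..b, (f t - c) ^ 2
      = (∫ t in a..b, f t ^ 2) - 2 * c * S + c ^ 2 * (b - a) := by
    have hsq : ∀ t, (f t - c) ^ 2 = f t ^ 2 - 2 * c * f t + c ^ 2 := fun t => by ring
    simp_rw [hsq]
    rw [intervalIntegral.integral_add (hf2.sub (hf.const_mul _)) intervalIntegrable_const,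
      intervalIntegral.integral_sub hf2 (hf.const_mul _), intervalIntegral.integral_const_mul,
      intervalIntegral.integral_const, smul_eq_mul]
    ring
  have hid : (b - a) * ∫ t in a..b, (f t - c) ^ 2 = (b - a) * (∫ t in a..b, f t ^ 2) - S ^ 2 := by
    rw [hexpand, ← hc]
    ring
  linarith [mul_nonneg (sub_pos.2 hlt).le hvar]

variable {E : Type*} [NormedAddCommGroup E] [NormedSpace ℝ E] {h : ℝ → E} {U : Set ℝ}

theorem norm_sub_le_integral_norm_deriv [CompleteSpace E] (hU : IsOpen U)
    (hh : ContDiffOn ℝ 1 h U) {x y : ℝ} (hxy : x ≤ y) (hsub : Icc x y ⊆ U) :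
    ‖h y - h x‖ ≤ ∫ t in x..y, ‖deriv h t‖ := by
  have huIcc : uIcc x y ⊆ U := by rwa [uIcc_of_le hxy]
  rw [← intervalIntegral.integral_eq_sub_of_hasDerivAt (fun t ht => ?_)
    ((hh.continuousOn_deriv_of_isOpen hU le_rfl).mono huIcc).intervalIntegrable]
  · exact intervalIntegral.norm_integral_le_integral_norm hxy
  · exact ((hh.differentiableOn one_ne_zero t (huIcc ht)).differentiableAt
      (hU.mem_nhds (huIcc ht))).hasDerivAt

theorem norm_sq_le_two_mul_norm_sq_add [CompleteSpace E] (hU : IsOpen U)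
    (hh : ContDiffOn ℝ 1 h U) {x y : ℝ} (hxy : x ≤ y) (hsub : Icc x y ⊆ U) :
    ‖h x‖ ^ 2 ≤ 2 * ‖h y‖ ^ 2 + 2 * (y - x) * ∫ t in x..y, ‖deriv h t‖ ^ 2 := by
  have hd : ContinuousOn (fun t => ‖deriv h t‖) (uIcc x y) :=
    ((hh.continuousOn_deriv_of_isOpen hU le_rfl).mono (by rwa [uIcc_of_le hxy])).norm
  have hcs := sq_intervalIntegral_le hxy hd.intervalIntegrable (hd.pow 2).intervalIntegrable
  set J := ∫ t in x..y, ‖deriv h t‖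
  have hJ : ‖h x‖ ≤ ‖h y‖ + J := by
    have := norm_sub_le_integral_norm_deriv hU hh hxy hsub
    have := norm_le_norm_add_norm_sub' (h x) (h y)
    rw [norm_sub_rev] at this
    linarith
  calc ‖h x‖ ^ 2 ≤ (‖h y‖ + J) ^ 2 := pow_le_pow_left₀ (norm_nonneg _) hJ 2
    _ ≤ 2 * ‖h y‖ ^ 2 + 2 * J ^ 2 := by nlinarith [sq_nonneg (‖h y‖ - J)]
    _ ≤ _ := by linarith

theorem norm_sq_le_weighted_integral_add_deriv_integral [CompleteSpace E]
    (hU : IsOpen U) (hh : ContDiffOn ℝ 1 h U) {δ : ℝ} (hδ : 0 < δ)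
    (hsub : Icc (-δ) (2 * δ) ⊆ U) {x : ℝ} (hx : x ∈ Icc (-δ) δ) :
    ‖h x‖ ^ 2 ≤ 2 / δ ^ 3 * (∫ y in δ..2 * δ, y ^ 2 * ‖h y‖ ^ 2)
      + 6 * δ * ∫ t in -δ..2 * δ, ‖deriv h t‖ ^ 2 := by
  set P := ∫ y in δ..2 * δ, y ^ 2 * ‖h y‖ ^ 2
  set I := ∫ t in -δ..2 * δ, ‖deriv h t‖ ^ 2
  have hδδ : δ ≤ 2 * δ := by linarith
  have hI : IntervalIntegrable (fun t => ‖deriv h t‖ ^ 2) volume (-δ) (2 * δ) :=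
    (((hh.continuousOn_deriv_of_isOpen hU le_rfl).mono
      (by rwa [uIcc_of_le (by linarith)])).norm.pow 2).intervalIntegrable
  have hP : IntervalIntegrable (fun y => y ^ 2 * ‖h y‖ ^ 2) volume δ (2 * δ) :=
    have hU' : uIcc δ (2 * δ) ⊆ U := by
      rw [uIcc_of_le hδδ]; exact (Icc_subset_Icc (by linarith) le_rfl).trans hsub
    ((continuousOn_pow 2).mul ((hh.continuousOn.mono hU').norm.pow 2)).intervalIntegrable
  have hpt : ∀ y ∈ Icc δ (2 * δ),
      δ ^ 2 * ‖h x‖ ^ 2 ≤ 2 * (y ^ 2 * ‖h y‖ ^ 2) + 6 * δ ^ 3 * I := by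
    intro y hy
    have hxy : x ≤ y := hx.2.trans hy.1
    have hA := norm_sq_le_two_mul_norm_sq_add hU hh hxy ((Icc_subset_Icc hx.1 hy.2).trans hsub)
    have hJ : (y - x) * ∫ t in x..y, ‖deriv h t‖ ^ 2 ≤ 3 * δ * I :=
      mul_le_mul (by linarith [hx.1, hy.2])
        (intervalIntegral.integral_mono_interval hx.1 hxy hy.2
          (ae_of_all _ fun _ => sq_nonneg _) hI)
        (intervalIntegral.integral_nonneg hxy fun _ _ => sq_nonneg _) (by linarith)
    have hy2 : δ ^ 2 * ‖h y‖ ^ 2 ≤ y ^ 2 * ‖h y‖ ^ 2 :=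
      mul_le_mul_of_nonneg_right (pow_le_pow_left₀ hδ.le hy.1 2) (sq_nonneg _)
    nlinarith [mul_le_mul_of_nonneg_left hA (sq_nonneg δ),
      mul_le_mul_of_nonneg_left hJ (sq_nonneg δ)]
  have hint := intervalIntegral.integral_mono_on hδδ intervalIntegrable_const
    ((hP.const_mul 2).add intervalIntegrable_const) hpt
  rw [intervalIntegral.integral_const,
    intervalIntegral.integral_add (hP.const_mul 2) intervalIntegrable_const,
    intervalIntegral.integral_const_mul, intervalIntegral.integral_const, smul_eq_mul,
    smul_eq_mul] at hint
  refine le_of_mul_le_mul_left ?_ (pow_pos hδ 3)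
  have hexp : δ ^ 3 * (2 / δ ^ 3 * P + 6 * δ * I) = 2 * P + 6 * δ ^ 4 * I := by
    field_simp
  rw [hexp]
  linarith

theorem ofReal_intervalIntegral_le_setLIntegral {f : ℝ → ℝ} {g : ℝ → ℝ≥0∞} {a b : ℝ}
    {s : Set ℝ} (hab : a ≤ b) (hf : ∀ t, 0 ≤ f t) (hfg : ∀ t, ENNReal.ofReal (f t) ≤ g t)
    (hs : Ioc a b ⊆ s) : ENNReal.ofReal (∫ t in a..b, f t) ≤ ∫⁻ t in s, g t := by
  rw [intervalIntegral.integral_of_le hab,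
    ← Real.enorm_of_nonneg (integral_nonneg hf)]
  calc ‖∫ t in Ioc a b, f t‖ₑ ≤ ∫⁻ t in Ioc a b, ‖f t‖ₑ := enorm_integral_le_lintegral_enorm f
    _ ≤ ∫⁻ t in Ioc a b, g t :=
        lintegral_mono fun t => (Real.enorm_of_nonneg (hf t)).trans_le (hfg t)
    _ ≤ ∫⁻ t in s, g t := lintegral_mono_set hs

theorem setLIntegral_diff_Ioo_le {A δ : ℝ} (hAδ : 6 * A * δ ^ 2 = 1) (hδ : 0 < δ)
    (hU : MeasurableSet U) :
    ENNReal.ofReal A * ∫⁻ x in U \ Ioo (-δ) δ, ENNReal.ofReal (‖h x‖ ^ 2)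
      ≤ 6 * ∫⁻ x in U,
        (ENNReal.ofReal (‖deriv h x‖ ^ 2) + ENNReal.ofReal (A ^ 2 * x ^ 2 * ‖h x‖ ^ 2)) := by
  have hA : 0 ≤ A := by nlinarith [sq_nonneg δ]
  have hpt : ∀ x ∈ U \ Ioo (-δ) δ, ENNReal.ofReal A * ENNReal.ofReal (‖h x‖ ^ 2)
      ≤ 6 * (ENNReal.ofReal (‖deriv h x‖ ^ 2) + ENNReal.ofReal (A ^ 2 * x ^ 2 * ‖h x‖ ^ 2)) := by
    rintro x ⟨-, hx⟩
    rw [mem_Ioo, ← abs_lt, not_lt] at hx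
    have hx2 : δ ^ 2 ≤ x ^ 2 := by simpa using pow_le_pow_left₀ hδ.le hx 2
    have hAx : A * ‖h x‖ ^ 2 ≤ 6 * (A ^ 2 * x ^ 2 * ‖h x‖ ^ 2) := by
      calc A * ‖h x‖ ^ 2 = 6 * A ^ 2 * ‖h x‖ ^ 2 * δ ^ 2 := by
            linear_combination (-(A * ‖h x‖ ^ 2)) * hAδ
        _ ≤ 6 * A ^ 2 * ‖h x‖ ^ 2 * x ^ 2 := by gcongr
        _ = _ := by ring
    calc ENNReal.ofReal A * ENNReal.ofReal (‖h x‖ ^ 2)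
        ≤ ENNReal.ofReal (6 * (A ^ 2 * x ^ 2 * ‖h x‖ ^ 2)) := by
          rw [← ENNReal.ofReal_mul hA]; exact ENNReal.ofReal_le_ofReal hAx
      _ ≤ _ := by
          rw [ENNReal.ofReal_mul (by norm_num), ENNReal.ofReal_ofNat]
          gcongr
          exact le_add_self
  calc ENNReal.ofReal A * ∫⁻ x in U \ Ioo (-δ) δ, ENNReal.ofReal (‖h x‖ ^ 2)
      = ∫⁻ x in U \ Ioo (-δ) δ, ENNReal.ofReal A * ENNReal.ofReal (‖h x‖ ^ 2) :=
        (lintegral_const_mul' _ _ ENNReal.ofReal_ne_top).symm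
    _ ≤ ∫⁻ x in U \ Ioo (-δ) δ,
          6 * (ENNReal.ofReal (‖deriv h x‖ ^ 2) + ENNReal.ofReal (A ^ 2 * x ^ 2 * ‖h x‖ ^ 2)) :=
        setLIntegral_mono' (hU.diff measurableSet_Ioo) hpt
    _ ≤ _ := by
        rw [lintegral_const_mul' _ _ (by norm_num)]
        gcongr
        exact sdiff_subset

theorem setLIntegral_Ioo_le [CompleteSpace E] (hU : IsOpen U) (hh : ContDiffOn ℝ 1 h U)
    {A δ : ℝ} (hAδ : 6 * A * δ ^ 2 = 1) (hδ : 0 < δ) (hsub : Icc (-δ) (2 * δ) ⊆ U) :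
    ENNReal.ofReal A * ∫⁻ x in Ioo (-δ) δ, ENNReal.ofReal (‖h x‖ ^ 2)
      ≤ 26 * ∫⁻ x in U,
        (ENNReal.ofReal (‖deriv h x‖ ^ 2) + ENNReal.ofReal (A ^ 2 * x ^ 2 * ‖h x‖ ^ 2)) := by
  set R := ∫⁻ x in U,
    (ENNReal.ofReal (‖deriv h x‖ ^ 2) + ENNReal.ofReal (A ^ 2 * x ^ 2 * ‖h x‖ ^ 2))
  set P := ∫ y in δ..2 * δ, y ^ 2 * ‖h y‖ ^ 2
  set I := ∫ t in -δ..2 * δ, ‖deriv h t‖ ^ 2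
  have hA : 0 ≤ A := by nlinarith [sq_nonneg δ]
  have hsup : ∫⁻ x in Ioo (-δ) δ, ENNReal.ofReal (‖h x‖ ^ 2)
      ≤ ENNReal.ofReal (2 / δ ^ 3 * P + 6 * δ * I) * ENNReal.ofReal (δ - -δ) := by
    rw [← Real.volume_Ioo, ← setLIntegral_const]
    exact setLIntegral_mono measurable_const fun x hx => ENNReal.ofReal_le_ofReal
      (norm_sq_le_weighted_integral_add_deriv_integral hU hh hδ hsub (Ioo_subset_Icc_self hx))
  have hP : ENNReal.ofReal (A ^ 2 * P) ≤ R := by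
    rw [← intervalIntegral.integral_const_mul]
    refine ofReal_intervalIntegral_le_setLIntegral (by linarith) (fun y => by positivity)
      (fun y => ?_) (Ioc_subset_Icc_self.trans ((Icc_subset_Icc (by linarith) le_rfl).trans hsub))
    rw [← mul_assoc]
    exact le_add_self
  have hI : ENNReal.ofReal I ≤ R :=
    ofReal_intervalIntegral_le_setLIntegral (by linarith) (fun t => by positivity)
      (fun t => le_self_add) (Ioc_subset_Icc_self.trans hsub)
  calc ENNReal.ofReal A * ∫⁻ x in Ioo (-δ) δ, ENNReal.ofReal (‖h x‖ ^ 2)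
      ≤ ENNReal.ofReal A
          * (ENNReal.ofReal (2 / δ ^ 3 * P + 6 * δ * I) * ENNReal.ofReal (δ - -δ)) := by
        gcongr
    _ = ENNReal.ofReal (24 * (A ^ 2 * P) + 2 * I) := by
        rw [← ENNReal.ofReal_mul' (by linarith), ← ENNReal.ofReal_mul hA]
        congr 1
        field_simp
        linear_combination (2 * I * δ ^ 2 - 4 * A * P) * hAδ
    _ ≤ 24 * ENNReal.ofReal (A ^ 2 * P) + 2 * ENNReal.ofReal I := by
        refine ENNReal.ofReal_add_le.trans_eq ?_
        rw [ENNReal.ofReal_mul (p := 24) (by norm_num), ENNReal.ofReal_mul (p := 2) (by norm_num),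
          ENNReal.ofReal_ofNat, ENNReal.ofReal_ofNat]
    _ ≤ 24 * R + 2 * R := by gcongr
    _ = 26 * R := by rw [← add_mul]; norm_num

theorem lintegral_norm_sq_le [CompleteSpace E] (hU : IsOpen U) (hh : ContDiffOn ℝ 1 h U)
    {A δ : ℝ} (hAδ : 6 * A * δ ^ 2 = 1) (hδ : 0 < δ) (hsub : Icc (-δ) (2 * δ) ⊆ U) :
    ENNReal.ofReal A * ∫⁻ x in U, ENNReal.ofReal (‖h x‖ ^ 2)
      ≤ 32 * ∫⁻ x in U,
        (ENNReal.ofReal (‖deriv h x‖ ^ 2) + ENNReal.ofReal (A ^ 2 * x ^ 2 * ‖h x‖ ^ 2)) := by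
  calc ENNReal.ofReal A * ∫⁻ x in U, ENNReal.ofReal (‖h x‖ ^ 2)
      ≤ ENNReal.ofReal A * (∫⁻ x in Ioo (-δ) δ ∪ U \ Ioo (-δ) δ, ENNReal.ofReal (‖h x‖ ^ 2)) := by
        gcongr
        exact subset_union_right.trans union_sdiff_self.symm.subset
    _ ≤ ENNReal.ofReal A * (∫⁻ x in Ioo (-δ) δ, ENNReal.ofReal (‖h x‖ ^ 2))
        + ENNReal.ofReal A * ∫⁻ x in U \ Ioo (-δ) δ, ENNReal.ofReal (‖h x‖ ^ 2) := by
        rw [← mul_add]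
        gcongr
        exact lintegral_union_le _ _ _
    _ ≤ 26 * _ + 6 * _ := add_le_add (setLIntegral_Ioo_le hU hh hAδ hδ hsub)
        (setLIntegral_diff_Ioo_le hAδ hδ hU.measurableSet)
    _ = _ := by rw [← add_mul]; norm_num

theorem statement1 :
    ∃ C : ℝ, 0 < C ∧
      ∀ A : ℝ, 1 ≤ A → ∀ h : ℝ → ℂ, ContDiffOn ℝ 1 h (Set.Ioo (-1 : ℝ) 1) →
        ENNReal.ofReal A * ∫⁻ x in Set.Ioo (-1 : ℝ) 1, ENNReal.ofReal (‖h x‖ ^ 2)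
          ≤ ENNReal.ofReal C *
            ∫⁻ x in Set.Ioo (-1 : ℝ) 1,
              (ENNReal.ofReal (‖deriv h x‖ ^ 2)
                + ENNReal.ofReal (A ^ 2 * x ^ 2 * ‖h x‖ ^ 2)) := by
  refine ⟨32, by norm_num, fun A hA h hh => ?_⟩
  obtain ⟨δ, hδ, hAδ⟩ : ∃ δ : ℝ, 0 < δ ∧ 6 * A * δ ^ 2 = 1 :=
    ⟨(√(6 * A))⁻¹, by positivity, by rw [inv_pow, Real.sq_sqrt (by positivity)]; field_simp⟩
  have hsub : Icc (-δ) (2 * δ) ⊆ Ioo (-1 : ℝ) 1 := fun x hx =>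
    ⟨by nlinarith [hx.1], by nlinarith [hx.2]⟩
  rw [ENNReal.ofReal_ofNat]
  exact lintegral_norm_sq_le isOpen_Ioo hh hAδ hδ hsub
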